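/- For any finite simple graph G, the sum over all edges {u, v} ∈ E(G) of min(deg(u), deg(v)) is at most 2·α(G)·|E(G)|, where α(G) is the arboricity of G. -/

import Mathlib

/-! Split the edges into `α(G)` forests. Rooting each tree of a forest, every edge joins a
vertex to its parent; charging the edge to that child `v`, whose degree bounds the edge's `min`,
charges every vertex at most once. So each forest contributes at most `∑ v, deg v = 2|E(G)|`. -/

open Finset

/-- The arboricity of a graph: the minimum number `k` of forests into which the edge set can
be partitioned (a partition of the edges into `k` acyclic graphs). -/
noncomputable def arboricity {V : Type} (G : SimpleGraph V) : ℕ :=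
  sInf {k : ℕ | ∃ c : Sym2 V → Fin k, ∀ i : Fin k,
    (SimpleGraph.fromEdgeSet {e ∈ G.edgeSet | c e = i}).IsAcyclic}

namespace SimpleGraph

variable {V : Type*} {H : SimpleGraph V}

lemma isAcyclic_edge (u v : V) : (edge u v).IsAcyclic := by
  by_cases h : u = v
  · simp [h, edge_self_eq_bot]
  · simpa using isAcyclic_bot.sup_edge_of_not_reachable (reachable_bot.not.mpr h)

lemma isAcyclic_fromEdgeSet_of_subsingleton {s : Set (Sym2 V)} (hs : s.Subsingleton) :
    (fromEdgeSet s).IsAcyclic := by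
  obtain rfl | ⟨e, rfl⟩ := hs.eq_empty_or_singleton
  · simp
  · induction e using Sym2.ind with
    | _ u v => exact isAcyclic_edge u v

lemma IsAcyclic.eq_penultimate_of_dist_le (hH : H.IsAcyclic) {r u w : V} {q : H.Walk r w}
    (hq : q.IsPath) (hq_len : q.length = H.dist r w) (hadj : H.Adj w u)
    (hdist : H.dist r u ≤ H.dist r w) : u = q.penultimate := by
  by_cases hu : u ∈ q.support
  · exact hH.eq_penultimate_of_adj_end hq hadj hu
  obtain ⟨p, hp, hp_len⟩ := (q.reachable.trans hadj.reachable).exists_path_of_dist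
  have hw : w ∈ p.support := hH.mem_support_of_ne_mem_support_of_adj_of_isPath hp hq hadj.symm hu
  have := congrArg Walk.length (hH.path_concat hq hp hadj hw)
  simp only [Walk.length_concat] at this
  omega

/-- The parent of `v` is the penultimate vertex of a shortest path from the root of its
component; a root is its own parent. -/
lemma IsAcyclic.exists_edgeSet_subset_range_parent (hH : H.IsAcyclic) :
    ∃ parent : V → V, H.edgeSet ⊆ Set.range fun v => s(parent v, v) := by
  let root v := (H.connectedComponentMk v).out
  have root_reachable v : H.Reachable (root v) v :=
    ConnectedComponent.exact (H.connectedComponentMk v).out_eq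
  choose q hq hq_len using fun v => (root_reachable v).exists_path_of_dist
  refine ⟨fun v => (q v).penultimate, ?_⟩
  rintro ⟨u, w⟩ (hadj : H.Adj u w)
  have hroot : root u = root w := by
    simp only [root, ConnectedComponent.sound hadj.reachable]
  rcases le_total (H.dist (root w) u) (H.dist (root w) w) with h | h
  · exact ⟨w, congrArg (s(·, w))
      (hH.eq_penultimate_of_dist_le (hq w) (hq_len w) hadj.symm h).symm⟩
  · rw [← hroot] at h
    exact ⟨u, Sym2.eq_swap.trans
      (congrArg (s(u, ·)) (hH.eq_penultimate_of_dist_le (hq u) (hq_len u) hadj h).symm)⟩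

lemma IsAcyclic.sum_edges_le_sum_vertices [Fintype V] {M : Type*} [AddCommMonoid M] [PartialOrder M]
    [CanonicallyOrderedAdd M] (hH : H.IsAcyclic) {s : Finset (Sym2 V)}
    (hs : (s : Set (Sym2 V)) ⊆ H.edgeSet) {g : Sym2 V → M} {w : V → M}
    (hgw : ∀ u v, g s(u, v) ≤ w v) : ∑ e ∈ s, g e ≤ ∑ v, w v := by
  classical
  obtain ⟨parent, hparent⟩ := hH.exists_edgeSet_subset_range_parent
  have hs_image : s ⊆ univ.image fun v => s(parent v, v) := fun e he => by
    simpa using hparent (hs he)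
  calc ∑ e ∈ s, g e ≤ ∑ e ∈ univ.image fun v => s(parent v, v), g e :=
        sum_le_sum_of_subset hs_image
    _ ≤ ∑ v, g s(parent v, v) := sum_image_le_of_nonneg fun _ _ => zero_le
    _ ≤ ∑ v, w v := sum_le_sum fun v _ => hgw (parent v) v

end SimpleGraph

lemma exists_isAcyclic_coloring_arboricity {V : Type} [Finite V] (G : SimpleGraph V) :
    ∃ c : Sym2 V → Fin (arboricity G), ∀ i,
      (SimpleGraph.fromEdgeSet {e ∈ G.edgeSet | c e = i}).IsAcyclic := by
  obtain ⟨n, ⟨σ⟩⟩ := Finite.exists_equiv_fin (Sym2 V)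
  have hσ : n ∈ {k : ℕ | ∃ c : Sym2 V → Fin k, ∀ i : Fin k,
      (SimpleGraph.fromEdgeSet {e ∈ G.edgeSet | c e = i}).IsAcyclic} :=
    ⟨σ, fun i => SimpleGraph.isAcyclic_fromEdgeSet_of_subsingleton
      fun e he e' he' => σ.injective (he.2.trans he'.2.symm)⟩
  exact Nat.sInf_mem ⟨n, hσ⟩

/-- Chiba–Nishizeki lemma: the sum over all edges `{u, v}` of `min (deg u) (deg v)` is at
most `2 · α(G) · |E(G)|`, where `α(G)` is the arboricity of `G`. -/
theorem stmt_15 {V : Type} [Fintype V] [DecidableEq V]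
    (G : SimpleGraph V) [DecidableRel G.Adj] :
    ∑ e ∈ G.edgeFinset,
        Sym2.lift ⟨fun u v => min (G.degree u) (G.degree v),
          fun u v => by simp [min_comm]⟩ e
      ≤ 2 * arboricity G * G.edgeFinset.card := by
  set minDeg : Sym2 V → ℕ := Sym2.lift ⟨fun u v => min (G.degree u) (G.degree v),
    fun u v => by simp [min_comm]⟩
  obtain ⟨c, hc⟩ := exists_isAcyclic_coloring_arboricity G
  have color_class_le (i : Fin (arboricity G)) :
      ∑ e ∈ G.edgeFinset with c e = i, minDeg e ≤ 2 * #G.edgeFinset := by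
    rw [← G.sum_degrees_eq_twice_card_edges]
    refine (hc i).sum_edges_le_sum_vertices (fun e he => ?_) fun u v => min_le_right _ _
    simp only [coe_filter, SimpleGraph.mem_edgeFinset, Set.mem_ofPred_eq] at he
    exact SimpleGraph.edgeSet_fromEdgeSet _ ▸ ⟨he, G.not_isDiag_of_mem_edgeSet he.1⟩
  calc ∑ e ∈ G.edgeFinset, minDeg e
      = ∑ i, ∑ e ∈ G.edgeFinset with c e = i, minDeg e := (sum_fiberwise _ _ _).symm
    _ ≤ ∑ _i : Fin (arboricity G), 2 * #G.edgeFinset := sum_le_sum fun i _ => color_class_le i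
    _ = 2 * arboricity G * #G.edgeFinset := by
      rw [sum_const, card_univ, Fintype.card_fin, smul_eq_mul]
      ring
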